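/- (Theorem 2) Suppose the sliding variable satisfies s'(t) = −c₁·sg(s(t)) − c₂·s(t) + (D(t) − D̂(t)), where D(t) = Wᵀ·H(t) + σ(t), D̂(t) = Ŵ(t)ᵀ·H(t), the approximation error is bounded ‖σ(t)‖ ≤ σ̄, the ideal weights are bounded ‖W‖ ≤ W̄, and the weights evolve by Ŵ'(t) = a·(H(t)·s(t)ᵀ − η‖s(t)‖·Ŵ(t)). If the inequality ‖s(t)‖ ≥ (σ̄ + (1/4)ηW̄²)/c₂ holds, then the Lyapunov function V(t) = (1/2)‖s(t)‖² + (1/(2a))‖W − Ŵ(t)‖² satisfies V'(t) ≤ −c₁·⟨s(t), sg(s(t))⟩ − η‖s(t)‖·((1/2)‖W‖ − ‖W − Ŵ(t)‖)² ≤ 0; hence the position control system is stable. -/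

import Mathlib

open Matrix
open scoped InnerProductSpace

/-- The saturated sign function with parameter `ε`. -/
noncomputable def sg (ε x : ℝ) : ℝ :=
  if x > ε then 1 else if x < -ε then -1 else x / ε

/-- `sg` applied componentwise to a vector in `ℝ³`. -/
noncomputable def sgVec (ε : ℝ) (v : EuclideanSpace ℝ (Fin 3)) :
    EuclideanSpace ℝ (Fin 3) :=
  WithLp.toLp 2 (fun i => sg ε (v i))

/-- Reinterpret a plain vector `Fin 3 → ℝ` as an element of `ℝ³`. -/
def toE3 (v : Fin 3 → ℝ) : EuclideanSpace ℝ (Fin 3) := WithLp.toLp 2 v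

/-- The Frobenius norm of an `m × 3` real matrix: `‖A‖ = √(tr(AᵀA))`. -/
noncomputable def frob {m : ℕ} (A : Matrix (Fin m) (Fin 3) ℝ) : ℝ :=
  Real.sqrt (Matrix.trace (Aᵀ * A))

/-!
Differentiating `V` along the closed loop gives `⟪s, s'⟫ + (1/a)⟪W - Ŵ, -Ŵ'⟫`. The adaptive law
is designed so that the mismatch term `⟪s, (W - Ŵ)ᵀH⟫` coming from the sliding dynamics cancels
against `⟪W - Ŵ, H sᵀ⟫` from the weight update, leaving
`V' = -c₁⟪s, sg s⟫ - c₂‖s‖² + ⟪s, σ⟫ + η‖s‖⟪W - Ŵ, Ŵ⟫`. Cauchy–Schwarz and completing the square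
give `⟪W - Ŵ, Ŵ⟫ ≤ ‖W‖²/4 - (‖W‖/2 - ‖W - Ŵ‖)²`, and the lower bound on `‖s‖` lets `c₂‖s‖²`
absorb `‖s‖σ̄ + η‖s‖W̄²/4`. Finally `x · sg x ≥ 0` makes the bound nonpositive.
-/

open Finset

lemma Matrix.trace_transpose_mul_self {ι κ : Type*} [Fintype ι] [Fintype κ] (A : Matrix ι κ ℝ) :
    trace (Aᵀ * A) = ∑ i, ∑ j, A i j ^ 2 := by
  simp only [trace, diag_apply, mul_apply, transpose_apply, sq]
  exact sum_comm

lemma mul_sg_nonneg {ε : ℝ} (hε : 0 < ε) (x : ℝ) : 0 ≤ x * sg ε x := by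
  unfold sg
  split_ifs with hpos hneg
  · linarith
  · linarith
  · rw [← mul_div_assoc]
    exact div_nonneg (mul_self_nonneg x) hε.le

lemma inner_sgVec_self_nonneg {ε : ℝ} (hε : 0 < ε) (v : EuclideanSpace ℝ (Fin 3)) :
    0 ≤ ⟪v, sgVec ε v⟫_ℝ := by
  rw [PiLp.inner_apply]
  refine sum_nonneg fun j _ => ?_
  simpa [sgVec, mul_comm] using mul_sg_nonneg hε (v j)

section

variable {m : ℕ}

lemma frob_sq (A : Matrix (Fin m) (Fin 3) ℝ) : frob A ^ 2 = ∑ i, ∑ j, A i j ^ 2 := by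
  rw [frob, trace_transpose_mul_self, Real.sq_sqrt (by positivity)]

lemma sum_mul_le_frob_mul_frob (A B : Matrix (Fin m) (Fin 3) ℝ) :
    ∑ i, ∑ j, A i j * B i j ≤ frob A * frob B := by
  simpa only [frob, trace_transpose_mul_self, Fintype.sum_prod_type] using
    Real.sum_mul_le_sqrt_mul_sqrt univ (fun p : Fin m × Fin 3 => A p.1 p.2)
      (fun p => B p.1 p.2)

/-- Cauchy–Schwarz followed by completing the square in `frob (B - A)`. -/
lemma sum_sub_mul_le_frob (A B : Matrix (Fin m) (Fin 3) ℝ) :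
    ∑ i, ∑ j, (B - A) i j * A i j ≤ frob B ^ 2 / 4 - (frob B / 2 - frob (B - A)) ^ 2 := by
  have hsplit : ∑ i, ∑ j, (B - A) i j * A i j
      = ∑ i, ∑ j, (B - A) i j * B i j - frob (B - A) ^ 2 := by
    rw [frob_sq, ← sum_sub_distrib]
    refine sum_congr rfl fun i _ => ?_
    rw [← sum_sub_distrib]
    exact sum_congr rfl fun j _ => by simp only [Matrix.sub_apply]; ring
  rw [hsplit]
  nlinarith [sum_mul_le_frob_mul_frob (B - A) B]

lemma hasDerivAt_frob_sub_sq (W : Matrix (Fin m) (Fin 3) ℝ) {M : ℝ → Matrix (Fin m) (Fin 3) ℝ}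
    {M' : Matrix (Fin m) (Fin 3) ℝ} {t : ℝ}
    (hM : ∀ i j, HasDerivAt (fun r => M r i j) (M' i j) t) :
    HasDerivAt (fun r => frob (W - M r) ^ 2)
      (-2 * ∑ i, ∑ j, (W - M t) i j * M' i j) t := by
  simp only [frob_sq, Matrix.sub_apply, mul_sum]
  refine HasDerivAt.fun_sum fun i _ => HasDerivAt.fun_sum fun j _ => ?_
  exact (((hM i j).const_sub (W i j)).pow 2).congr_deriv (by ring)

lemma hasDerivAt_frob_sub_sq_of_adaptive_law (W : Matrix (Fin m) (Fin 3) ℝ)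
    {M : ℝ → Matrix (Fin m) (Fin 3) ℝ} {B : Matrix (Fin m) (Fin 3) ℝ} {a k t : ℝ} (ha : a ≠ 0)
    (hM : ∀ i j, HasDerivAt (fun r => M r i j) (a * (B i j - k * M t i j)) t) :
    HasDerivAt (fun r => 1 / (2 * a) * frob (W - M r) ^ 2)
      (k * ∑ i, ∑ j, (W - M t) i j * M t i j - ∑ i, ∑ j, (W - M t) i j * B i j) t := by
  refine ((hasDerivAt_frob_sub_sq W hM).const_mul _).congr_deriv ?_
  have hterm : ∀ i j, (W - M t) i j * (a * (B i j - k * M t i j))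
      = a * ((W - M t) i j * B i j) - a * k * ((W - M t) i j * M t i j) := fun _ _ => by ring
  simp only [hterm, sum_sub_distrib, ← mul_sum]
  field_simp
  ring

lemma inner_toE3_transpose_mulVec (A : Matrix (Fin m) (Fin 3) ℝ) (h : EuclideanSpace ℝ (Fin m))
    (v : EuclideanSpace ℝ (Fin 3)) :
    ⟪v, toE3 (Aᵀ *ᵥ h)⟫_ℝ = ∑ i, ∑ j, A i j * vecMulVec h v i j := by
  simp only [toE3, PiLp.inner_apply, RCLike.inner_apply, conj_trivial, mulVec,
    dotProduct, transpose_apply, vecMulVec_apply, sum_mul]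
  rw [sum_comm]
  exact sum_congr rfl fun i _ => sum_congr rfl fun j _ => by ring

lemma inner_sliding_dynamics_eq (c₁ c₂ : ℝ) (s g σ : EuclideanSpace ℝ (Fin 3))
    (W What : Matrix (Fin m) (Fin 3) ℝ) (h : EuclideanSpace ℝ (Fin m)) :
    ⟪s, -(c₁ • g) - c₂ • s + (toE3 (Wᵀ *ᵥ h) + σ - toE3 (Whatᵀ *ᵥ h))⟫_ℝ
      = -(c₁ * ⟪s, g⟫_ℝ) - c₂ * ‖s‖ ^ 2 + ⟪s, σ⟫_ℝ
        + ∑ i, ∑ j, (W - What) i j * vecMulVec h s i j := by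
  have hlin : toE3 (Wᵀ *ᵥ h) - toE3 (Whatᵀ *ᵥ h) = toE3 ((W - What)ᵀ *ᵥ h) := by
    simp only [toE3, transpose_sub, sub_mulVec, WithLp.toLp_sub]
  rw [add_sub_right_comm, hlin, inner_add_right, inner_add_right, inner_sub_right, inner_neg_right,
    real_inner_smul_right, real_inner_smul_right, real_inner_self_eq_norm_sq,
    inner_toE3_transpose_mulVec]
  ring

end

theorem rbfnn_position_controller_stable_general {m : ℕ}
    (ε c₁ c₂ η a σbar Wbar : ℝ) (hε0 : 0 < ε)
    (hc₁ : 0 < c₁) (hc₂ : 0 < c₂) (hη : 0 < η) (ha : 0 < a)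
    (s : ℝ → EuclideanSpace ℝ (Fin 3)) (hs : Differentiable ℝ s)
    (H : ℝ → EuclideanSpace ℝ (Fin m))
    (σ : ℝ → EuclideanSpace ℝ (Fin 3))
    (hσb : ∀ t, ‖σ t‖ ≤ σbar)
    (W : Matrix (Fin m) (Fin 3) ℝ) (hWb : frob W ≤ Wbar)
    (What : ℝ → Matrix (Fin m) (Fin 3) ℝ)
    (D Dhat : ℝ → EuclideanSpace ℝ (Fin 3))
    (hD : ∀ t, D t = toE3 (Wᵀ.mulVec (H t)) + σ t)
    (hDhat : ∀ t, Dhat t = toE3 ((What t)ᵀ.mulVec (H t)))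
    (hWhat : ∀ t i j, HasDerivAt (fun r => What r i j)
        (a * (Matrix.vecMulVec (H t) (s t) i j - η * ‖s t‖ * What t i j)) t)
    (hsd : ∀ t, deriv s t = -(c₁ • sgVec ε (s t)) - c₂ • s t + (D t - Dhat t)) :
    ∀ t, (σbar + (1 / 4) * η * Wbar ^ 2) / c₂ ≤ ‖s t‖ →
      deriv (fun r => (1 / 2 : ℝ) * ‖s r‖ ^ 2
          + (1 / (2 * a)) * frob (W - What r) ^ 2) t
        ≤ -(c₁ * ⟪s t, sgVec ε (s t)⟫_ℝ)
          - η * ‖s t‖ * ((1 / 2) * frob W - frob (W - What t)) ^ 2 ∧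
      -(c₁ * ⟪s t, sgVec ε (s t)⟫_ℝ)
          - η * ‖s t‖ * ((1 / 2) * frob W - frob (W - What t)) ^ 2 ≤ 0 := by
  intro t hst
  have hV := (((hs t).hasDerivAt.norm_sq.const_mul (1 / 2 : ℝ)).fun_add
    (hasDerivAt_frob_sub_sq_of_adaptive_law W ha.ne' (hWhat t))).deriv
  rw [hV, hsd t, hD t, hDhat t, inner_sliding_dynamics_eq]
  have hσs : ⟪s t, σ t⟫_ℝ ≤ ‖s t‖ * σbar :=
    (real_inner_le_norm _ _).trans (mul_le_mul_of_nonneg_left (hσb t) (norm_nonneg _))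
  have hweights := sum_sub_mul_le_frob (What t) W
  have hWsq : frob W ^ 2 ≤ Wbar ^ 2 := pow_le_pow_left₀ (Real.sqrt_nonneg _) hWb 2
  have hgain : σbar + (1 / 4) * η * Wbar ^ 2 ≤ c₂ * ‖s t‖ := by
    rwa [div_le_iff₀' hc₂] at hst
  have hsg := inner_sgVec_self_nonneg hε0 (s t)
  have hηs : 0 ≤ η * ‖s t‖ := by positivity
  constructor
  · nlinarith [mul_le_mul_of_nonneg_left hweights hηs, mul_le_mul_of_nonneg_left hWsq hηs,
      mul_le_mul_of_nonneg_left hgain (norm_nonneg (s t))]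
  · nlinarith [mul_nonneg hηs (sq_nonneg ((1 / 2) * frob W - frob (W - What t)))]

/-- Theorem 2: with the RBFNN estimator, bounded approximation error
`‖σ‖ ≤ σ̄` and bounded ideal weights `‖W‖ ≤ W̄`, if
`‖s(t)‖ ≥ (σ̄ + ηW̄²/4)/c₂` then the Lyapunov function
`V = (1/2)‖s‖² + (1/(2a))‖W − Ŵ‖²` satisfies
`V' ≤ −c₁⟨s, sg(s)⟩ − η‖s‖((1/2)‖W‖ − ‖W̃‖)² ≤ 0`. -/
theorem rbfnn_position_controller_stable {m : ℕ}
    (ε c₁ c₂ η a σbar Wbar : ℝ) (hε0 : 0 < ε) (hε1 : ε < 1)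
    (hc₁ : 0 < c₁) (hc₂ : 0 < c₂) (hη : 0 < η) (ha : 0 < a)
    (hσbar : 0 ≤ σbar) (hWbar : 0 ≤ Wbar)
    (s : ℝ → EuclideanSpace ℝ (Fin 3)) (hs : Differentiable ℝ s)
    (H : ℝ → EuclideanSpace ℝ (Fin m)) (hH : Continuous H)
    (σ : ℝ → EuclideanSpace ℝ (Fin 3)) (hσ : Continuous σ)
    (hσb : ∀ t, ‖σ t‖ ≤ σbar)
    (W : Matrix (Fin m) (Fin 3) ℝ) (hWb : frob W ≤ Wbar)
    (What : ℝ → Matrix (Fin m) (Fin 3) ℝ)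
    (D Dhat : ℝ → EuclideanSpace ℝ (Fin 3))
    (hD : ∀ t, D t = toE3 (Wᵀ.mulVec (H t)) + σ t)
    (hDhat : ∀ t, Dhat t = toE3 ((What t)ᵀ.mulVec (H t)))
    (hWhat : ∀ t i j, HasDerivAt (fun r => What r i j)
        (a * (Matrix.vecMulVec (H t) (s t) i j - η * ‖s t‖ * What t i j)) t)
    (hsd : ∀ t, deriv s t = -(c₁ • sgVec ε (s t)) - c₂ • s t + (D t - Dhat t)) :
    ∀ t, (σbar + (1 / 4) * η * Wbar ^ 2) / c₂ ≤ ‖s t‖ →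
      deriv (fun r => (1 / 2 : ℝ) * ‖s r‖ ^ 2
          + (1 / (2 * a)) * frob (W - What r) ^ 2) t
        ≤ -(c₁ * ⟪s t, sgVec ε (s t)⟫_ℝ)
          - η * ‖s t‖ * ((1 / 2) * frob W - frob (W - What t)) ^ 2 ∧
      -(c₁ * ⟪s t, sgVec ε (s t)⟫_ℝ)
          - η * ‖s t‖ * ((1 / 2) * frob W - frob (W - What t)) ^ 2 ≤ 0 :=
  rbfnn_position_controller_stable_general ε c₁ c₂ η a σbar Wbar hε0 hc₁ hc₂ hη ha s hs H σ hσb W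
    hWb What D Dhat hD hDhat hWhat hsd
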